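/- arXiv:1507.05263 — 4 statements merged into one kernel-verified Lean document; each statement's English description precedes it below -/
import Mathlib

section
/- With the notation of the block transformation above, the statistic T(Z_c, S_c) = (Z_{2.3}† S_{2.3}^{-1} Z_{2.3}, Z_3† S_33^{-1} Z_3) is invariant: T(G Z_c + F, G S_c G†) = T(Z_c, S_c) for every block upper-triangular invertible G (with partition (t,r,N−J)) and every F = [F1; 0; 0]. -/
/-!
The blocks 2 and 3 of `G Z_c + F` and `G S_c Gᴴ` only see the lower right corner
`H = [G₂₂ G₂₃; 0 G₃₃]` of `G`, and `F` vanishes there. Under `(Z, S) ↦ (H Z, H S Hᴴ)`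
the pair `(Z₃, S₃₃)` becomes `(G₃₃ Z₃, G₃₃ S₃₃ G₃₃ᴴ)` and the pair `(Z_{2.3}, S_{2.3})`
becomes `(G₂₂ Z_{2.3}, G₂₂ S_{2.3} G₂₂ᴴ)`. Both components of the statistic are quadratic
forms `Xᴴ S⁻¹ X`, which are unchanged by `(X, S) ↦ (A X, A S Aᴴ)` for invertible `A`.
-/

open Matrix
open scoped ComplexOrder

namespace Matrix

variable {R : Type*} {k l m n α β : Type*}

section Congruence

variable [CommRing R] [StarRing R] [Fintype n] [DecidableEq n]

lemma mul_conjTranspose_mul_inv_conj_mul {D : Matrix n n R} (hD : IsUnit D.det)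
    (X : Matrix α n R) (P : Matrix n n R) (Y : Matrix n β R) :
    X * Dᴴ * (D * P * Dᴴ)⁻¹ * (D * Y) = X * P⁻¹ * Y := by
  have hDH : IsUnit Dᴴ.det := by rw [det_conjTranspose]; exact hD.star
  rw [mul_inv_rev, mul_inv_rev, Matrix.mul_assoc, Matrix.mul_assoc, Matrix.mul_assoc,
    mul_nonsing_inv_cancel_left _ _ hDH, Matrix.mul_assoc, Matrix.mul_assoc,
    nonsing_inv_mul_cancel_left _ _ hD]

lemma conjTranspose_mul_inv_conj_mul {D : Matrix n n R} (hD : IsUnit D.det)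
    (Z : Matrix n β R) (P : Matrix n n R) :
    (D * Z)ᴴ * (D * P * Dᴴ)⁻¹ * (D * Z) = Zᴴ * P⁻¹ * Z := by
  rw [conjTranspose_mul, mul_conjTranspose_mul_inv_conj_mul hD]

end Congruence

section SchurComplement

variable [CommRing R] [Fintype n] [DecidableEq n]

noncomputable def schurComplement (P : Matrix (m ⊕ n) (m ⊕ n) R) : Matrix m m R :=
  P.toBlocks₁₁ - P.toBlocks₁₂ * P.toBlocks₂₂⁻¹ * P.toBlocks₂₁

noncomputable def partialResidual (P : Matrix (m ⊕ n) (m ⊕ n) R) (W : Matrix (m ⊕ n) k R) :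
    Matrix m k R :=
  W.toRows₁ - P.toBlocks₁₂ * P.toBlocks₂₂⁻¹ * W.toRows₂

end SchurComplement

section TwoBlocks

variable [Fintype m] [Fintype n] (A : Matrix m m R) (B : Matrix m n R) (D : Matrix n n R)

lemma toRows₁_fromBlocks_zero_mul [Semiring R] (W : Matrix (m ⊕ n) k R) :
    (fromBlocks A B 0 D * W).toRows₁ = A * W.toRows₁ + B * W.toRows₂ := by
  conv_lhs => rw [← fromRows_toRows W]
  rw [fromBlocks_mul_fromRows, toRows₁_fromRows]

lemma toRows₂_fromBlocks_zero_mul [Semiring R] (W : Matrix (m ⊕ n) k R) :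
    (fromBlocks A B 0 D * W).toRows₂ = D * W.toRows₂ := by
  conv_lhs => rw [← fromRows_toRows W]
  rw [fromBlocks_mul_fromRows, toRows₂_fromRows, Matrix.zero_mul, zero_add]

lemma fromBlocks_zero_mul_mul_conjTranspose [Semiring R] [StarRing R]
    (P : Matrix (m ⊕ n) (m ⊕ n) R) :
    fromBlocks A B 0 D * P * (fromBlocks A B 0 D)ᴴ =
      fromBlocks
        ((A * P.toBlocks₁₁ + B * P.toBlocks₂₁) * Aᴴ +
          (A * P.toBlocks₁₂ + B * P.toBlocks₂₂) * Bᴴ)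
        ((A * P.toBlocks₁₂ + B * P.toBlocks₂₂) * Dᴴ)
        (D * (P.toBlocks₂₁ * Aᴴ + P.toBlocks₂₂ * Bᴴ))
        (D * P.toBlocks₂₂ * Dᴴ) := by
  conv_lhs => rw [← fromBlocks_toBlocks P]
  simp [fromBlocks_multiply, fromBlocks_conjTranspose, Matrix.mul_add, Matrix.mul_assoc]

variable [CommRing R] [StarRing R] [DecidableEq n] {D} {P : Matrix (m ⊕ n) (m ⊕ n) R}

lemma partialResidual_fromBlocks_zero_conj (hP : IsUnit P.toBlocks₂₂.det)
    (hD : IsUnit D.det) (W : Matrix (m ⊕ n) k R) :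
    partialResidual (fromBlocks A B 0 D * P * (fromBlocks A B 0 D)ᴴ)
        (fromBlocks A B 0 D * W) =
      A * partialResidual P W := by
  rw [partialResidual, partialResidual, fromBlocks_zero_mul_mul_conjTranspose,
    toBlocks_fromBlocks₁₂, toBlocks_fromBlocks₂₂, toRows₁_fromBlocks_zero_mul,
    toRows₂_fromBlocks_zero_mul, mul_conjTranspose_mul_inv_conj_mul hD, Matrix.add_mul,
    Matrix.add_mul, mul_nonsing_inv_cancel_right _ _ hP]
  simp only [Matrix.mul_sub, Matrix.mul_assoc]
  abel

lemma schurComplement_fromBlocks_zero_conj (hP : IsUnit P.toBlocks₂₂.det)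
    (hD : IsUnit D.det) :
    schurComplement (fromBlocks A B 0 D * P * (fromBlocks A B 0 D)ᴴ) =
      A * schurComplement P * Aᴴ := by
  rw [schurComplement, schurComplement, fromBlocks_zero_mul_mul_conjTranspose,
    toBlocks_fromBlocks₁₁, toBlocks_fromBlocks₁₂, toBlocks_fromBlocks₂₁, toBlocks_fromBlocks₂₂,
    mul_conjTranspose_mul_inv_conj_mul hD, Matrix.add_mul _ _ P.toBlocks₂₂⁻¹,
    mul_nonsing_inv_cancel_right _ _ hP]
  simp only [Matrix.mul_sub, Matrix.sub_mul, Matrix.mul_add, Matrix.add_mul, Matrix.mul_assoc,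
    nonsing_inv_mul_cancel_left _ _ hP]
  abel

end TwoBlocks

section ThreeBlocks

def lastTwoBlocks : m ⊕ n → (l ⊕ m) ⊕ n := Sum.elim (Sum.inl ∘ Sum.inr) Sum.inr

variable [Fintype l] [Fintype m] [Fintype n]
  (G₁₁ : Matrix l l R) (G₁₂ : Matrix l m R) (G₁₃ : Matrix l n R)
  (G₂₂ : Matrix m m R) (G₂₃ : Matrix m n R) (G₃₃ : Matrix n n R)

lemma submatrix_lastTwoBlocks_mul [Semiring R] (X : Matrix ((l ⊕ m) ⊕ n) α R)
    (g : β → α) :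
    (fromBlocks (fromBlocks G₁₁ G₁₂ 0 G₂₂) (fromRows G₁₃ G₂₃) 0 G₃₃ * X).submatrix
        lastTwoBlocks g =
      fromBlocks G₂₂ G₂₃ 0 G₃₃ * X.submatrix lastTwoBlocks g := by
  ext (i | i) j <;> simp [lastTwoBlocks, mul_apply, Fintype.sum_sum_type]

variable [Semiring R] [StarRing R]

lemma submatrix_mul_conjTranspose_lastTwoBlocks (X : Matrix α ((l ⊕ m) ⊕ n) R)
    (f : β → α) :
    (X * (fromBlocks (fromBlocks G₁₁ G₁₂ 0 G₂₂) (fromRows G₁₃ G₂₃) 0 G₃₃)ᴴ).submatrix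
        f lastTwoBlocks =
      X.submatrix f lastTwoBlocks * (fromBlocks G₂₂ G₂₃ 0 G₃₃)ᴴ := by
  rw [← conjTranspose_conjTranspose X, ← conjTranspose_mul, ← conjTranspose_submatrix,
    submatrix_lastTwoBlocks_mul, conjTranspose_mul, conjTranspose_submatrix]

lemma submatrix_lastTwoBlocks_conj (S : Matrix ((l ⊕ m) ⊕ n) ((l ⊕ m) ⊕ n) R) :
    (fromBlocks (fromBlocks G₁₁ G₁₂ 0 G₂₂) (fromRows G₁₃ G₂₃) 0 G₃₃ * S *
        (fromBlocks (fromBlocks G₁₁ G₁₂ 0 G₂₂) (fromRows G₁₃ G₂₃) 0 G₃₃)ᴴ).submatrix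
        lastTwoBlocks lastTwoBlocks =
      fromBlocks G₂₂ G₂₃ 0 G₃₃ * S.submatrix lastTwoBlocks lastTwoBlocks *
        (fromBlocks G₂₂ G₂₃ 0 G₃₃)ᴴ := by
  rw [Matrix.mul_assoc, submatrix_lastTwoBlocks_mul, submatrix_mul_conjTranspose_lastTwoBlocks,
    Matrix.mul_assoc]

end ThreeBlocks

end Matrix

theorem stmt3_general (t r q M : ℕ)
    (Sc : Matrix ((Fin t ⊕ Fin r) ⊕ Fin q) ((Fin t ⊕ Fin r) ⊕ Fin q) ℂ)
    (hSc : Sc.PosDef)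
    (Zc : Matrix ((Fin t ⊕ Fin r) ⊕ Fin q) (Fin M) ℂ)
    (G11 : Matrix (Fin t) (Fin t) ℂ) (G12 : Matrix (Fin t) (Fin r) ℂ)
    (G13 : Matrix (Fin t) (Fin q) ℂ) (G22 : Matrix (Fin r) (Fin r) ℂ)
    (G23 : Matrix (Fin r) (Fin q) ℂ) (G33 : Matrix (Fin q) (Fin q) ℂ)
    (hG22 : IsUnit G22.det) (hG33 : IsUnit G33.det)
    (F1 : Matrix (Fin t) (Fin M) ℂ) :
    let G : Matrix ((Fin t ⊕ Fin r) ⊕ Fin q) ((Fin t ⊕ Fin r) ⊕ Fin q) ℂ :=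
      fromBlocks (fromBlocks G11 G12 0 G22) (fromRows G13 G23) 0 G33
    let F : Matrix ((Fin t ⊕ Fin r) ⊕ Fin q) (Fin M) ℂ :=
      fromRows (fromRows F1 0) 0
    let Zb := G * Zc + F
    let Sb := G * Sc * Gᴴ
    let Z2 := Zc.submatrix (fun i : Fin r => Sum.inl (Sum.inr i)) id
    let Z3 := Zc.submatrix (Sum.inr : Fin q → (Fin t ⊕ Fin r) ⊕ Fin q) id
    let S22 := Sc.submatrix (fun i : Fin r => Sum.inl (Sum.inr i))
      (fun j : Fin r => Sum.inl (Sum.inr j))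
    let S23 := Sc.submatrix (fun i : Fin r => Sum.inl (Sum.inr i))
      (Sum.inr : Fin q → (Fin t ⊕ Fin r) ⊕ Fin q)
    let S32 := Sc.submatrix (Sum.inr : Fin q → (Fin t ⊕ Fin r) ⊕ Fin q)
      (fun j : Fin r => Sum.inl (Sum.inr j))
    let S33 := Sc.submatrix (Sum.inr : Fin q → (Fin t ⊕ Fin r) ⊕ Fin q)
      (Sum.inr : Fin q → (Fin t ⊕ Fin r) ⊕ Fin q)
    let Zb2 := Zb.submatrix (fun i : Fin r => Sum.inl (Sum.inr i)) id
    let Zb3 := Zb.submatrix (Sum.inr : Fin q → (Fin t ⊕ Fin r) ⊕ Fin q) id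
    let Sb22 := Sb.submatrix (fun i : Fin r => Sum.inl (Sum.inr i))
      (fun j : Fin r => Sum.inl (Sum.inr j))
    let Sb23 := Sb.submatrix (fun i : Fin r => Sum.inl (Sum.inr i))
      (Sum.inr : Fin q → (Fin t ⊕ Fin r) ⊕ Fin q)
    let Sb32 := Sb.submatrix (Sum.inr : Fin q → (Fin t ⊕ Fin r) ⊕ Fin q)
      (fun j : Fin r => Sum.inl (Sum.inr j))
    let Sb33 := Sb.submatrix (Sum.inr : Fin q → (Fin t ⊕ Fin r) ⊕ Fin q)
      (Sum.inr : Fin q → (Fin t ⊕ Fin r) ⊕ Fin q)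
    let Z23 := Z2 - S23 * S33⁻¹ * Z3
    let S23dot := S22 - S23 * S33⁻¹ * S32
    let Zb23 := Zb2 - Sb23 * Sb33⁻¹ * Zb3
    let Sb23dot := Sb22 - Sb23 * Sb33⁻¹ * Sb32
    (Zb23ᴴ * Sb23dot⁻¹ * Zb23 = Z23ᴴ * S23dot⁻¹ * Z23) ∧
    (Zb3ᴴ * Sb33⁻¹ * Zb3 = Z3ᴴ * S33⁻¹ * Z3) := by
  intro G F Zb Sb Z2 Z3 S22 S23 S32 S33 Zb2 Zb3 Sb22 Sb23 Sb32 Sb33 Z23 S23dot Zb23 Sb23dot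
  set H := fromBlocks G22 G23 0 G33
  set Z' := Zc.submatrix lastTwoBlocks id
  set S' := Sc.submatrix lastTwoBlocks lastTwoBlocks
  have hZ : Zb.submatrix lastTwoBlocks id = H * Z' := by
    have hF : F.submatrix lastTwoBlocks id = 0 := by ext (i | i) j <;> rfl
    calc Zb.submatrix lastTwoBlocks id
        = (G * Zc).submatrix lastTwoBlocks id + F.submatrix lastTwoBlocks id := rfl
      _ = H * Z' := by rw [hF, add_zero, submatrix_lastTwoBlocks_mul]
  have hS : Sb.submatrix lastTwoBlocks lastTwoBlocks = H * S' * Hᴴ :=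
    submatrix_lastTwoBlocks_conj ..
  have hS33 : IsUnit S'.toBlocks₂₂.det :=
    (isUnit_iff_isUnit_det _).mp (hSc.submatrix Sum.inr_injective).isUnit
  have hZb3 : Zb3 = G33 * Z3 := by
    change (Zb.submatrix lastTwoBlocks id).toRows₂ = _
    rw [hZ, toRows₂_fromBlocks_zero_mul]
    rfl
  have hSb33 : Sb33 = G33 * S33 * G33ᴴ := by
    change (Sb.submatrix lastTwoBlocks lastTwoBlocks).toBlocks₂₂ = _
    rw [hS, fromBlocks_zero_mul_mul_conjTranspose, toBlocks_fromBlocks₂₂]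
    rfl
  have hZb23 : Zb23 = G22 * Z23 := by
    change partialResidual (Sb.submatrix lastTwoBlocks lastTwoBlocks)
      (Zb.submatrix lastTwoBlocks id) = _
    rw [hZ, hS, partialResidual_fromBlocks_zero_conj _ _ hS33 hG33]
    rfl
  have hSb23dot : Sb23dot = G22 * S23dot * G22ᴴ := by
    change schurComplement (Sb.submatrix lastTwoBlocks lastTwoBlocks) = _
    rw [hS, schurComplement_fromBlocks_zero_conj _ _ hS33 hG33]
    rfl
  exact ⟨by rw [hZb23, hSb23dot, conjTranspose_mul_inv_conj_mul hG22],
    by rw [hZb3, hSb33, conjTranspose_mul_inv_conj_mul hG33]⟩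

/-- Invariance of the MIS T(Z_c,S_c) = (Z_{2.3}ᴴ S_{2.3}⁻¹ Z_{2.3}, Z₃ᴴ S₃₃⁻¹ Z₃)
under (Z_c,S_c) ↦ (G Z_c + F, G S_c Gᴴ). -/
theorem stmt3 (t r q M : ℕ)
    (Sc : Matrix ((Fin t ⊕ Fin r) ⊕ Fin q) ((Fin t ⊕ Fin r) ⊕ Fin q) ℂ)
    (hSc : Sc.PosDef)
    (Zc : Matrix ((Fin t ⊕ Fin r) ⊕ Fin q) (Fin M) ℂ)
    (G11 : Matrix (Fin t) (Fin t) ℂ) (G12 : Matrix (Fin t) (Fin r) ℂ)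
    (G13 : Matrix (Fin t) (Fin q) ℂ) (G22 : Matrix (Fin r) (Fin r) ℂ)
    (G23 : Matrix (Fin r) (Fin q) ℂ) (G33 : Matrix (Fin q) (Fin q) ℂ)
    (hG11 : IsUnit G11.det) (hG22 : IsUnit G22.det) (hG33 : IsUnit G33.det)
    (F1 : Matrix (Fin t) (Fin M) ℂ) :
    let G : Matrix ((Fin t ⊕ Fin r) ⊕ Fin q) ((Fin t ⊕ Fin r) ⊕ Fin q) ℂ :=
      fromBlocks (fromBlocks G11 G12 0 G22) (fromRows G13 G23) 0 G33
    let F : Matrix ((Fin t ⊕ Fin r) ⊕ Fin q) (Fin M) ℂ :=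
      fromRows (fromRows F1 0) 0
    let Zb := G * Zc + F
    let Sb := G * Sc * Gᴴ
    let Z2 := Zc.submatrix (fun i : Fin r => Sum.inl (Sum.inr i)) id
    let Z3 := Zc.submatrix (Sum.inr : Fin q → (Fin t ⊕ Fin r) ⊕ Fin q) id
    let S22 := Sc.submatrix (fun i : Fin r => Sum.inl (Sum.inr i))
      (fun j : Fin r => Sum.inl (Sum.inr j))
    let S23 := Sc.submatrix (fun i : Fin r => Sum.inl (Sum.inr i))
      (Sum.inr : Fin q → (Fin t ⊕ Fin r) ⊕ Fin q)
    let S32 := Sc.submatrix (Sum.inr : Fin q → (Fin t ⊕ Fin r) ⊕ Fin q)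
      (fun j : Fin r => Sum.inl (Sum.inr j))
    let S33 := Sc.submatrix (Sum.inr : Fin q → (Fin t ⊕ Fin r) ⊕ Fin q)
      (Sum.inr : Fin q → (Fin t ⊕ Fin r) ⊕ Fin q)
    let Zb2 := Zb.submatrix (fun i : Fin r => Sum.inl (Sum.inr i)) id
    let Zb3 := Zb.submatrix (Sum.inr : Fin q → (Fin t ⊕ Fin r) ⊕ Fin q) id
    let Sb22 := Sb.submatrix (fun i : Fin r => Sum.inl (Sum.inr i))
      (fun j : Fin r => Sum.inl (Sum.inr j))
    let Sb23 := Sb.submatrix (fun i : Fin r => Sum.inl (Sum.inr i))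
      (Sum.inr : Fin q → (Fin t ⊕ Fin r) ⊕ Fin q)
    let Sb32 := Sb.submatrix (Sum.inr : Fin q → (Fin t ⊕ Fin r) ⊕ Fin q)
      (fun j : Fin r => Sum.inl (Sum.inr j))
    let Sb33 := Sb.submatrix (Sum.inr : Fin q → (Fin t ⊕ Fin r) ⊕ Fin q)
      (Sum.inr : Fin q → (Fin t ⊕ Fin r) ⊕ Fin q)
    let Z23 := Z2 - S23 * S33⁻¹ * Z3
    let S23dot := S22 - S23 * S33⁻¹ * S32
    let Zb23 := Zb2 - Sb23 * Sb33⁻¹ * Zb3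
    let Sb23dot := Sb22 - Sb23 * Sb33⁻¹ * Sb32
    (Zb23ᴴ * Sb23dot⁻¹ * Zb23 = Z23ᴴ * S23dot⁻¹ * Z23) ∧
    (Zb3ᴴ * Sb33⁻¹ * Zb3 = Z3ᴴ * S33⁻¹ * Z3) :=
  stmt3_general t r q M Sc hSc Zc G11 G12 G13 G22 G23 G33 hG22 hG33 F1
end

section
/- Maximality in the two-block case: let Z, Z̄ ∈ ℂ^{p×M} and let S, S̄ ∈ ℂ^{p×p} be positive definite. If Z† S^{-1} Z = Z̄† S̄^{-1} Z̄, then there exists an invertible matrix G ∈ GL(p, ℂ) such that Z = G Z̄ and S = G S̄ G†. -/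
open Matrix
open scoped ComplexOrder InnerProductSpace

/-!
Factor `S = R Rᴴ` and `S̄ = R̄ R̄ᴴ` with `R`, `R̄` invertible. The hypothesis then says that
`A = R⁻¹ Z` and `B = R̄⁻¹ Z̄` have the same Gram matrix `Aᴴ A = Bᴴ B`, so `B x ↦ A x` is a
well-defined isometry from the column space of `B` onto that of `A`. Extending it to all of `ℂᵖ`
gives a unitary `U` with `A = U B`, and `G = R U R̄⁻¹` carries `(Z̄, S̄)` to `(Z, S)`.
-/

theorem LinearMap.exists_linearIsometry_apply_eq_of_norm_eq {𝕜 E F : Type*} [RCLike 𝕜]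
    [AddCommGroup E] [Module 𝕜 E] [NormedAddCommGroup F] [InnerProductSpace 𝕜 F]
    [FiniteDimensional 𝕜 F] {f g : E →ₗ[𝕜] F} (h : ∀ x, ‖f x‖ = ‖g x‖) :
    ∃ U : F →ₗᵢ[𝕜] F, ∀ x, U (g x) = f x := by
  have hker : ker g ≤ ker f := fun x hx => by
    simpa [mem_ker, ← norm_eq_zero, h x] using hx
  let L : range g →ₗ[𝕜] F := (ker g).liftQ f hker ∘ₗ g.quotKerEquivRange.symm.toLinearMap
  have hL : ∀ x, L (g.rangeRestrict x) = f x := fun x =>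
    congrArg ((ker g).liftQ f hker) (g.quotKerEquivRange.symm_apply_apply (Submodule.Quotient.mk x))
  have hL_norm : ∀ y, ‖L y‖ = ‖y‖ := by
    rintro ⟨-, x, rfl⟩
    exact (congrArg norm (hL x)).trans (h x)
  exact ⟨LinearIsometry.extend ⟨L, hL_norm⟩,
    fun x => (LinearIsometry.extend_apply _ (g.rangeRestrict x)).trans (hL x)⟩

namespace Matrix

theorem conjTranspose_mul_mul_conjTranspose_inv_mul {α m n : Type*} [CommRing α] [StarRing α]
    [Fintype n] [DecidableEq n] (R : Matrix n n α) (Z : Matrix n m α) :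
    Zᴴ * (R * Rᴴ)⁻¹ * Z = (R⁻¹ * Z)ᴴ * (R⁻¹ * Z) := by
  rw [Matrix.mul_inv_rev, ← conjTranspose_nonsing_inv, conjTranspose_mul]
  simp only [Matrix.mul_assoc]

variable {𝕜 m n : Type*} [RCLike 𝕜] [Fintype m] [DecidableEq m] [Fintype n] [DecidableEq n]

theorem PosDef.exists_eq_mul_conjTranspose {S : Matrix n n 𝕜} (hS : S.PosDef) :
    ∃ R : Matrix n n 𝕜, IsUnit R.det ∧ S = R * Rᴴ := by
  open scoped MatrixOrder in
  obtain ⟨B, hB⟩ := CStarAlgebra.nonneg_iff_eq_star_mul_self.mp hS.posSemidef.nonneg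
  refine ⟨Bᴴ, (isUnit_iff_isUnit_det _).mp (isUnit_of_mul_isUnit_left (hB ▸ hS.isUnit)), ?_⟩
  rwa [conjTranspose_conjTranspose]

theorem inner_toEuclideanLin_toEuclideanLin (A : Matrix m n 𝕜) (x y : EuclideanSpace 𝕜 n) :
    ⟪toEuclideanLin A x, toEuclideanLin A y⟫_𝕜 = ⟪x, toEuclideanLin (Aᴴ * A) y⟫_𝕜 := by
  rw [toLpLin_mul_same, toEuclideanLin_conjTranspose_eq_adjoint, LinearMap.comp_apply,
    LinearMap.adjoint_inner_right]

theorem norm_toEuclideanLin_eq_of_conjTranspose_mul_self_eq {A B : Matrix m n 𝕜}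
    (h : Aᴴ * A = Bᴴ * B) (x : EuclideanSpace 𝕜 n) :
    ‖toEuclideanLin A x‖ = ‖toEuclideanLin B x‖ := by
  rw [@norm_eq_sqrt_re_inner 𝕜, @norm_eq_sqrt_re_inner 𝕜, inner_toEuclideanLin_toEuclideanLin,
    inner_toEuclideanLin_toEuclideanLin, h]

theorem exists_mem_unitaryGroup_eq_mul_of_conjTranspose_mul_self_eq {A B : Matrix m n 𝕜}
    (h : Aᴴ * A = Bᴴ * B) : ∃ U ∈ unitaryGroup m 𝕜, A = U * B := by
  obtain ⟨V, hV⟩ := LinearMap.exists_linearIsometry_apply_eq_of_norm_eq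
    (norm_toEuclideanLin_eq_of_conjTranspose_mul_self_eq h)
  obtain ⟨U, hU⟩ := toEuclideanLin.surjective V.toLinearMap
  refine ⟨U, mem_unitaryGroup_iff'.mpr ?_, ?_⟩
  · apply toEuclideanLin.injective
    rw [star_eq_conjTranspose, toLpLin_mul_same, toEuclideanLin_conjTranspose_eq_adjoint, hU,
      V.adjoint_comp_self', toLpLin_one]
  · apply toEuclideanLin.injective
    rw [toLpLin_mul_same, hU]
    exact (LinearMap.ext hV).symm

end Matrix

theorem stmt4_general (p M : ℕ)
    (Z Zb : Matrix (Fin p) (Fin M) ℂ) (S Sb : Matrix (Fin p) (Fin p) ℂ)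
    (hS : S.PosDef) (hSb : Sb.PosDef)
    (h : Zᴴ * S⁻¹ * Z = Zbᴴ * Sb⁻¹ * Zb) :
    ∃ G : Matrix (Fin p) (Fin p) ℂ, IsUnit G.det ∧ Z = G * Zb ∧ S = G * Sb * Gᴴ := by
  obtain ⟨R, hR, rfl⟩ := hS.exists_eq_mul_conjTranspose
  obtain ⟨Rb, hRb, rfl⟩ := hSb.exists_eq_mul_conjTranspose
  rw [conjTranspose_mul_mul_conjTranspose_inv_mul, conjTranspose_mul_mul_conjTranspose_inv_mul] at h
  obtain ⟨U, hU, hUZ⟩ := exists_mem_unitaryGroup_eq_mul_of_conjTranspose_mul_self_eq h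
  have hRbH : IsUnit Rbᴴ.det := by rwa [det_conjTranspose, isUnit_star]
  refine ⟨R * U * Rb⁻¹, ?_, ?_, ?_⟩
  · rw [det_mul, det_mul]
    exact (hR.mul (UnitaryGroup.det_isUnit ⟨U, hU⟩)).mul (isUnit_nonsing_inv_det _ hRb)
  · rw [Matrix.mul_assoc, Matrix.mul_assoc, ← hUZ, mul_nonsing_inv_cancel_left _ _ hR]
  · rw [conjTranspose_mul, conjTranspose_mul, conjTranspose_nonsing_inv]
    simp only [Matrix.mul_assoc, nonsing_inv_mul_cancel_left _ _ hRb,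
      mul_nonsing_inv_cancel_left _ _ hRbH]
    rw [← Matrix.mul_assoc U, ← star_eq_conjTranspose U, mem_unitaryGroup_iff.mp hU,
      Matrix.one_mul]

/-- Maximality in the two-block case: if Zᴴ S⁻¹ Z = Z̄ᴴ S̄⁻¹ Z̄ then (Z,S) and (Z̄,S̄)
lie in the same orbit of the action (Z,S) ↦ (GZ, G S Gᴴ) of GL(p,ℂ). -/
theorem stmt4 (p M : ℕ) (hp : 1 ≤ p)
    (Z Zb : Matrix (Fin p) (Fin M) ℂ) (S Sb : Matrix (Fin p) (Fin p) ℂ)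
    (hS : S.PosDef) (hSb : Sb.PosDef)
    (h : Zᴴ * S⁻¹ * Z = Zbᴴ * Sb⁻¹ * Zb) :
    ∃ G : Matrix (Fin p) (Fin p) ℂ, IsUnit G.det ∧ Z = G * Zb ∧ S = G * Sb * Gᴴ :=
  stmt4_general p M Z Zb S Sb hS hSb h
end

section
/- Maximality of (eig, |coordinates|) for a Hermitian matrix plus rank-one pair: let T_b = U_b Λ U_b† and T̃_b = Ũ_b Λ Ũ_b† be Hermitian M×M matrices with the same eigenvalues, and let a, ã ∈ ℂ^M with |U_b† a| = |Ũ_b† ã| (entrywise). Then there exists a unitary matrix V ∈ U(M) such that V† T_b V = T̃_b and V† (a a†) V = ã ã†. -/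
/-! Both matrices are diagonal, with the same `Λ`, in their eigenbases, and there the coordinate
vectors `Ubᴴ a` and `Utbᴴ ã` have equal moduli, so they differ by a diagonal matrix `D` of phases.
Such a `D` commutes with `Λ`, hence `V = Ub Dᴴ Utbᴴ` conjugates `T_b` to `T̃_b` and sends `a` to
`Vᴴ a = ã`, which carries `a aᴴ` to `ã ãᴴ`. -/

open Matrix

theorem RCLike.exists_mem_unitary_mul_eq_of_norm_eq {𝕜 : Type*} [RCLike 𝕜] {z w : 𝕜}
    (h : ‖z‖ = ‖w‖) : ∃ u ∈ unitary 𝕜, u * z = w := by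
  rcases eq_or_ne z 0 with rfl | hz
  · exact ⟨1, one_mem _, by simpa [eq_comm] using h⟩
  · refine ⟨w / z, Unitary.mem_iff_star_mul_self.mpr ?_, div_mul_cancel₀ w hz⟩
    have hz' : (‖z‖ : 𝕜) ^ 2 ≠ 0 := by simpa using hz
    rw [star_div₀, div_mul_div_comm, RCLike.star_def, RCLike.conj_mul,
      RCLike.conj_mul, ← h, div_self hz']

theorem Matrix.diagonal_mem_unitaryGroup {n α : Type*} [Fintype n] [DecidableEq n]
    [CommRing α] [StarRing α] {e : n → α} (he : ∀ i, e i ∈ unitary α) :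
    diagonal e ∈ unitaryGroup n α := by
  rw [mem_unitaryGroup_iff', star_eq_conjTranspose, diagonal_conjTranspose,
    diagonal_mul_diagonal, ← diagonal_one]
  exact congrArg diagonal (funext fun i => Unitary.star_mul_self_of_mem (he i))

theorem Matrix.exists_diagonal_mulVec_eq_of_norm_eq {n 𝕜 : Type*} [Fintype n] [DecidableEq n]
    [RCLike 𝕜] {b c : n → 𝕜} (h : ∀ i, ‖b i‖ = ‖c i‖) :
    ∃ e : n → 𝕜, (∀ i, e i ∈ unitary 𝕜) ∧ diagonal e *ᵥ b = c := by
  choose e he hec using fun i => RCLike.exists_mem_unitary_mul_eq_of_norm_eq (h i)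
  exact ⟨e, he, funext fun i => by rw [mulVec_diagonal, hec]⟩

theorem Unitary.star_mul_conj_mul_eq_of_commute {R : Type*} [Monoid R] [StarMul R] {U U' W X : R}
    (hU : U ∈ unitary R) (hW : W ∈ unitary R) (hWX : Commute W X) :
    star (U * star W * star U') * (U * X * star U) * (U * star W * star U') =
      U' * X * star U' := by
  calc star (U * star W * star U') * (U * X * star U) * (U * star W * star U')
      = U' * W * (star U * U) * X * (star U * U) * star W * star U' := by
        simp only [star_mul, star_star, mul_assoc]
    _ = U' * (X * (W * star W)) * star U' := by
        rw [Unitary.star_mul_self_of_mem hU, mul_one, mul_one, mul_assoc U' W, hWX.eq]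
        simp only [mul_assoc]
    _ = U' * X * star U' := by rw [Unitary.mul_star_self_of_mem hW, mul_one]

theorem Matrix.conjTranspose_mul_vecMulVec_star_mul {m n α : Type*} [Fintype m] [Fintype n]
    [CommSemiring α] [StarRing α] (V : Matrix m n α) (a : m → α) :
    Vᴴ * vecMulVec a (star a) * V = vecMulVec (Vᴴ *ᵥ a) (star (Vᴴ *ᵥ a)) := by
  rw [mul_vecMulVec, vecMulVec_mul, star_mulVec, conjTranspose_conjTranspose]

/-- Maximality of (eig, |coordinates|): if T_b and T̃_b have the same eigenvalues and
|U_bᴴ a| = |Ũ_bᴴ ã| entrywise, then a single unitary V conjugates T_b to T̃_b and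
a aᴴ to ã ãᴴ. -/
theorem stmt9 (M : ℕ) (d : Fin M → ℝ)
    (Ub Utb : Matrix (Fin M) (Fin M) ℂ)
    (hUb : Ub ∈ Matrix.unitaryGroup (Fin M) ℂ)
    (hUtb : Utb ∈ Matrix.unitaryGroup (Fin M) ℂ)
    (a at' : Fin M → ℂ)
    (Tb Ttb : Matrix (Fin M) (Fin M) ℂ)
    (hTb : Tb = Ub * Matrix.diagonal (fun i => (d i : ℂ)) * Ubᴴ)
    (hTtb : Ttb = Utb * Matrix.diagonal (fun i => (d i : ℂ)) * Utbᴴ)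
    (hmod : ∀ i, ‖(Ubᴴ.mulVec a) i‖ = ‖(Utbᴴ.mulVec at') i‖) :
    ∃ V : Matrix (Fin M) (Fin M) ℂ, V ∈ Matrix.unitaryGroup (Fin M) ℂ ∧
      Vᴴ * Tb * V = Ttb ∧
      Vᴴ * Matrix.vecMulVec a (star a) * V = Matrix.vecMulVec at' (star at') := by
  obtain ⟨e, he, hphase⟩ := exists_diagonal_mulVec_eq_of_norm_eq hmod
  have hD := diagonal_mem_unitaryGroup he
  have hVa : (Ub * star (diagonal e) * star Utb)ᴴ *ᵥ a = at' := by
    rw [← star_eq_conjTranspose, star_mul, star_mul, star_star, star_star, ← mulVec_mulVec,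
      ← mulVec_mulVec, star_eq_conjTranspose Ub, hphase, mulVec_mulVec,
      ← star_eq_conjTranspose, Unitary.mul_star_self_of_mem hUtb, one_mulVec]
  refine ⟨Ub * star (diagonal e) * star Utb,
    mul_mem (mul_mem hUb (Unitary.star_mem hD)) (Unitary.star_mem hUtb), ?_, ?_⟩
  · simp only [hTb, hTtb, ← star_eq_conjTranspose]
    exact Unitary.star_mul_conj_mul_eq_of_commute hUb hD (commute_diagonal _ _)
  · rw [conjTranspose_mul_vecMulVec_star_mul, hVa]
end

section
/- Unique recovery of moduli from two interlacing spectra: let Λ = diag(λ_1,…,λ_M) with distinct diagonal entries, k ∈ ℂ^M with all entries nonzero, and let x_{2,1},…,x_{2,M} be the eigenvalues of Λ + k k† (all distinct from the λ_n). Then the vectors α_i ∈ ℝ^M with entries (α_i)_n = (λ_n − x_{2,i})^{-1}, i = 1,…,M, are linearly independent, and hence the system α_i^T ε = −1 (i = 1,…,M) has the unique solution ε = (|k_1|², …, |k_M|²). In particular |k| is uniquely determined by eig(Λ) and eig(Λ + k k†). -/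
open Matrix Polynomial Finset

-- Cauchy-type linear independence
lemma cauchyLI {M : ℕ} {d x : Fin M → ℝ} (hd : Function.Injective d)
    (hxinj : Function.Injective x) (hdx : ∀ i n, x i ≠ d n) :
    LinearIndependent ℝ (fun i : Fin M => fun n : Fin M => (d n - x i)⁻¹) := by
  rw [Fintype.linearIndependent_iff]
  intro g hg i
  set P : ℝ[X] := ∑ j, C (g j) * ∏ l ∈ univ.erase j, (X - C (x l)) with hP
  have hdeg : P.natDegree < M := by
    have h1 : P.natDegree ≤ M - 1 := by
      apply natDegree_sum_le_of_forall_le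
      intro j _
      refine (natDegree_mul_le).trans ?_
      simp only [natDegree_C, zero_add]
      refine (natDegree_prod_le _ _).trans ?_
      have hprodeq : ∑ l ∈ univ.erase j, (X - C (x l)).natDegree = (univ.erase j).card := by
        simp [natDegree_X_sub_C]
      rw [hprodeq, Finset.card_erase_of_mem (mem_univ j)]
      simp
    have hM : 0 < M := i.pos
    omega
  have hPeval : ∀ n, P.eval (d n) = 0 := by
    intro n
    have hgn := congr_fun hg n
    simp only [Finset.sum_apply, Pi.smul_apply, smul_eq_mul, Pi.zero_apply] at hgn
    have hfac : ∀ j, ∏ l ∈ univ.erase j, (d n - x l)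
        = (d n - x j)⁻¹ * ∏ l, (d n - x l) := by
      intro j
      rw [← Finset.mul_prod_erase univ _ (mem_univ j)]
      field_simp [sub_ne_zero.2 (Ne.symm (hdx j n))]
    have : P.eval (d n) = (∑ j, g j * (d n - x j)⁻¹) * ∏ l, (d n - x l) := by
      simp only [hP, eval_finset_sum, eval_mul, eval_C, eval_prod, eval_sub, eval_X,
        Finset.sum_mul]
      exact Finset.sum_congr rfl fun j _ => by rw [hfac j]; ring
    rw [this, hgn, zero_mul]
  have hP0 : P = 0 :=
    P.eq_zero_of_natDegree_lt_card_of_eval_eq_zero hd hPeval (by simpa using hdeg)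
  have hPi := congr_arg (fun q => Polynomial.eval (x i) q) hP0
  simp only [hP, eval_finset_sum, eval_mul, eval_C, eval_prod, eval_sub, eval_X,
    eval_zero] at hPi
  rw [Finset.sum_eq_single i] at hPi
  · have hprod : ∏ l ∈ univ.erase i, (x i - x l) ≠ 0 := by
      apply Finset.prod_ne_zero_iff.2
      intro l hl
      exact sub_ne_zero.2 fun h => (Finset.mem_erase.1 hl).1 (hxinj h.symm)
    exact (mul_eq_zero.1 hPi).resolve_right hprod
  · intro j _ hj
    apply mul_eq_zero_of_right
    exact Finset.prod_eq_zero (Finset.mem_erase.2 ⟨fun h => hj h.symm, mem_univ i⟩)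
      (by simp)
  · simp

/-- Unique recovery of |k| from the two spectra: the vectors α_i = (1/(λ_n − x_{2,i}))_n
are linearly independent and the linear system α_iᵀ ε = −1 has the unique solution
ε = (|k_1|², …, |k_M|²). -/
theorem stmt12 (M : ℕ) (d : Fin M → ℝ) (k : Fin M → ℂ)
    (hd : Function.Injective d) (hk : ∀ n, k n ≠ 0)
    (hH : (Matrix.diagonal (fun n => (d n : ℂ)) + Matrix.vecMulVec k (star k)).IsHermitian)
    (hx : ∀ i n, hH.eigenvalues i ≠ d n) :
    LinearIndependent ℝ (fun i : Fin M => fun n : Fin M => (d n - hH.eigenvalues i)⁻¹) ∧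
    ∀ ε : Fin M → ℝ,
      ((∀ i, ∑ n, (d n - hH.eigenvalues i)⁻¹ * ε n = -1) ↔
        ε = fun n => ‖k n‖ ^ 2) := by
  classical
  set x : Fin M → ℝ := hH.eigenvalues with hxdef
  set v : Fin M → (Fin M → ℂ) := fun i => ⇑(hH.eigenvectorBasis i) with hvdef
  set c : Fin M → ℂ := fun i => ∑ m, (starRingEnd ℂ) (k m) * v i m with hcdef
  have hsub : ∀ i n, ((x i : ℂ) - (d n : ℂ)) ≠ 0 := by
    intro i n
    have : (x i - d n : ℝ) ≠ 0 := sub_ne_zero.2 (hx i n)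
    rw [← Complex.ofReal_sub]
    exact_mod_cast this
  have key : ∀ i n, ((x i : ℂ) - (d n : ℂ)) * v i n = k n * c i := by
    intro i n
    have h := congr_fun (hH.mulVec_eigenvectorBasis i) n
    simp only [Matrix.mulVec, dotProduct, Matrix.add_apply, Matrix.diagonal_apply,
      Matrix.vecMulVec_apply, Pi.star_apply, Pi.smul_apply, add_mul,
      Finset.sum_add_distrib, ite_mul, zero_mul, Finset.sum_ite_eq, Finset.mem_univ,
      if_true] at h
    have h2 : (d n : ℂ) * v i n + ∑ m, k n * star (k m) * v i m = x i • v i n := h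
    rw [Complex.real_smul] at h2
    have hsum : ∑ m, k n * star (k m) * v i m = k n * c i := by
      simp only [hcdef, Finset.mul_sum]
      exact Finset.sum_congr rfl fun m _ => by rw [mul_assoc]; rfl
    rw [hsum] at h2
    linear_combination -h2
  have hv : ∀ i n, v i n = c i * k n / ((x i : ℂ) - (d n : ℂ)) := by
    intro i n
    rw [eq_div_iff (hsub i n), mul_comm (v i n), key i n]
    ring
  have hvne : ∀ i, v i ≠ 0 := by
    intro i h0
    apply hH.eigenvectorBasis.orthonormal.ne_zero i
    ext n
    exact congr_fun h0 n
  have hc : ∀ i, c i ≠ 0 := by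
    intro i h0
    apply hvne i
    funext n
    have := key i n
    rw [h0, mul_zero] at this
    exact (mul_eq_zero.1 this).resolve_left (hsub i n)
  have hsecC : ∀ i, ∑ n, ((Complex.normSq (k n) : ℂ)) / ((x i : ℂ) - (d n : ℂ)) = 1 := by
    intro i
    have h1 : c i = c i * ∑ n, ((Complex.normSq (k n) : ℂ)) / ((x i : ℂ) - (d n : ℂ)) := by
      nth_rewrite 1 [hcdef]
      rw [Finset.mul_sum]
      apply Finset.sum_congr rfl
      intro n _
      rw [hv i n, Complex.normSq_eq_conj_mul_self]
      ring
    have h2 : c i * 1 = c i * ∑ n, ((Complex.normSq (k n) : ℂ)) / ((x i : ℂ) - (d n : ℂ)) := by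
      rw [mul_one]; exact h1
    exact (mul_left_cancel₀ (hc i) h2).symm
  have hsec : ∀ i, ∑ n, (d n - x i)⁻¹ * (‖k n‖ ^ 2) = -1 := by
    intro i
    have h := hsecC i
    have h2 : ((∑ n, Complex.normSq (k n) / (x i - d n) : ℝ) : ℂ) = ((1 : ℝ) : ℂ) := by
      push_cast
      exact h
    have h3 := Complex.ofReal_injective h2
    have : ∑ n, (d n - x i)⁻¹ * (‖k n‖ ^ 2)
        = -∑ n, Complex.normSq (k n) / (x i - d n) := by
      rw [← Finset.sum_neg_distrib]
      apply Finset.sum_congr rfl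
      intro n _
      rw [Complex.sq_norm, div_eq_mul_inv, show d n - x i = -(x i - d n) by ring, inv_neg]
      ring
    rw [this, h3]
  have hxinj : Function.Injective x := by
    intro i j hij
    by_contra hne
    have horth := hH.eigenvectorBasis.orthonormal.2 hne
    have hinner : (0 : ℂ) = ∑ n, (starRingEnd ℂ) (v i n) * v j n := by
      rw [← horth]
      simp only [PiLp.inner_apply, RCLike.inner_apply]
      exact Finset.sum_congr rfl fun n _ => mul_comm _ _
    have hterm : ∀ n, (starRingEnd ℂ) (v i n) * v j n
        = (starRingEnd ℂ) (c i) * c j * ((Complex.normSq (k n) / (x i - d n) ^ 2 : ℝ) : ℂ) := by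
      intro n
      rw [hv i n, hv j n, ← hij]
      rw [map_div₀, _root_.map_mul, ← Complex.ofReal_sub, Complex.conj_ofReal]
      push_cast
      rw [Complex.normSq_eq_conj_mul_self]
      field_simp
    have hS : (0 : ℝ) < ∑ n, Complex.normSq (k n) / (x i - d n) ^ 2 := by
      apply Finset.sum_pos
      · intro n _
        apply div_pos (Complex.normSq_pos.2 (hk n))
        have : x i - d n ≠ 0 := sub_ne_zero.2 (hx i n)
        positivity
      · exact ⟨i, mem_univ i⟩
    rw [Finset.sum_congr rfl (fun n _ => hterm n), ← Finset.mul_sum, ← Complex.ofReal_sum] at hinner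
    have := hinner.symm
    rcases mul_eq_zero.1 this with h | h
    · rcases mul_eq_zero.1 h with h' | h'
      · exact hc i (by simpa using h')
      · exact hc j h'
    · rw [Complex.ofReal_eq_zero] at h
      exact hS.ne' h
  constructor
  · exact cauchyLI hd hxinj hx
  · intro ε
    constructor
    · intro hε
      set A : Matrix (Fin M) (Fin M) ℝ := Matrix.of (fun i n => (d n - x i)⁻¹) with hA
      have hLI : LinearIndependent ℝ (fun i => A i) := cauchyLI hd hxinj hx
      have hUnit : IsUnit A := Matrix.linearIndependent_rows_iff_isUnit.1 hLI
      have hInj := Matrix.mulVec_injective_iff_isUnit.2 hUnit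
      have h1 : A.mulVec ε = A.mulVec (fun n => ‖k n‖ ^ 2) := by
        funext i
        simp only [Matrix.mulVec, dotProduct, hA, Matrix.of_apply]
        rw [hε i, hsec i]
      exact hInj h1
    · rintro rfl
      exact hsec
end
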